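/- The 4×4 Hermitian matrix B^{π/4} := (1/4)·[[4, 0, 1−i, 2−2i],[0, 0, 0, −1+i],[1+i, 0, 0, 0],[2+2i, −1−i, 0, 4]] is not positive semidefinite: there exists a vector v ∈ ℂ⁴ with v†·B^{π/4}·v < 0. Hence the reduced dynamics induced by applying √CPHASE to the entangled state Ψ(π/4) is not completely positive. -/

import Mathlib

open Matrix Complex
open scoped ComplexOrder

/-- The dynamical (Choi) matrix B^{π/4} of the reduced dynamics obtained by applying
√CPHASE to the entangled state Ψ(π/4). -/
noncomputable def Bpi4 : Matrix (Fin 4) (Fin 4) ℂ :=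
  (1 / 4 : ℂ) •
    !![4, 0, 1 - I, 2 - 2 * I;
       0, 0, 0, -1 + I;
       1 + I, 0, 0, 0;
       2 + 2 * I, -1 - I, 0, 4]

theorem Matrix.not_posSemidef_of_re_dotProduct_mulVec_neg {n 𝕜 : Type*} [Fintype n] [RCLike 𝕜]
    {A : Matrix n n 𝕜} {v : n → 𝕜} (hv : RCLike.re (star v ⬝ᵥ A *ᵥ v) < 0) :
    ¬ A.PosSemidef := fun hA =>
  hv.not_ge (RCLike.nonneg_iff.mp (hA.dotProduct_mulVec_nonneg v)).1

/- The witness lives on the coordinates 0 and 2, where the principal minor of `Bpi4` has a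
vanishing diagonal entry next to the nonzero entry (1 + i)/4. -/
theorem star_dotProduct_Bpi4_mulVec_eq_neg_one :
    star ![1, 0, -4, 0] ⬝ᵥ Bpi4 *ᵥ ![1, 0, -4, 0] = -1 := by
  simp [Bpi4, mulVec, dotProduct, Fin.sum_univ_four, Complex.ext_iff]

/-- B^{π/4} is not positive semidefinite: there is a vector v with v†·B^{π/4}·v < 0.
Hence the reduced dynamics induced by √CPHASE on Ψ(π/4) is not completely positive. -/
theorem Bpi4_not_posSemidef :
    (∃ v : Fin 4 → ℂ, (star v ⬝ᵥ Bpi4 *ᵥ v).re < 0) ∧ ¬ Bpi4.PosSemidef := by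
  have hneg : (star ![1, 0, -4, 0] ⬝ᵥ Bpi4 *ᵥ ![1, 0, -4, 0]).re < 0 := by
    rw [star_dotProduct_Bpi4_mulVec_eq_neg_one]
    norm_num
  exact ⟨⟨_, hneg⟩, not_posSemidef_of_re_dotProduct_mulVec_neg hneg⟩
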